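/- Characterisation of rational closure: let K be a defeasible knowledge base having a modular model. A statement α (a GCI or a DCI) is in the rational closure of K if and only if K rationally entails α, i.e. the big ranked model O of K satisfies α. -/

import Mathlib

namespace DefeasibleDL

/-- ALC concepts over concept names `C` and role names `R`. -/
inductive Concept (C R : Type) : Type where
  | top : Concept C R
  | bot : Concept C R
  | atom : C → Concept C R
  | neg : Concept C R → Concept C R
  | conj : Concept C R → Concept C R → Concept C R
  | disj : Concept C R → Concept C R → Concept C R
  | ex : R → Concept C R → Concept C R
  | all : R → Concept C R → Concept C R

/-- A classical interpretation with domain `D`. -/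
structure ClassInterp (C R D : Type) where
  interpC : C → Set D
  interpR : R → D → D → Prop

/-- Extension of a concept in a classical interpretation. -/
def ClassInterp.eval {C R D : Type} (I : ClassInterp C R D) : Concept C R → Set D
  | .top => Set.univ
  | .bot => ∅
  | .atom a => I.interpC a
  | .neg c => (I.eval c)ᶜ
  | .conj c d => I.eval c ∩ I.eval d
  | .disj c d => I.eval c ∪ I.eval d
  | .ex r c => {x | ∃ y, I.interpR r x y ∧ y ∈ I.eval c}
  | .all r c => {x | ∀ y, I.interpR r x y → y ∈ I.eval c}

/-- The `pref`-minimal elements of a set `S`. -/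
def minSet {D : Type} (pref : D → D → Prop) (S : Set D) : Set D :=
  {x | x ∈ S ∧ ∀ y ∈ S, ¬ pref y x}

/-- A preferential interpretation: a classical interpretation together with a smooth
strict partial order on the domain. -/
structure PrefInterp (C R D : Type) extends ClassInterp C R D where
  pref : D → D → Prop
  pref_irrefl : ∀ x, ¬ pref x x
  pref_trans : ∀ x y z, pref x y → pref y z → pref x z
  smooth : ∀ c : Concept C R, (toClassInterp.eval c).Nonempty →
      (minSet pref (toClassInterp.eval c)).Nonempty

/-- Satisfaction of a general concept inclusion `c ⊑ d`. -/
def PrefInterp.satGCI {C R D : Type} (P : PrefInterp C R D) (c d : Concept C R) : Prop :=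
  P.toClassInterp.eval c ⊆ P.toClassInterp.eval d

/-- Satisfaction of a defeasible concept inclusion `c ⊏∼ d`. -/
def PrefInterp.satDCI {C R D : Type} (P : PrefInterp C R D) (c d : Concept C R) : Prop :=
  minSet P.pref (P.toClassInterp.eval c) ⊆ P.toClassInterp.eval d

/-- A strict partial order is modular if its incomparability relation is transitive. -/
def Modular {D : Type} (pref : D → D → Prop) : Prop :=
  ∀ x y z : D, (¬ pref x y ∧ ¬ pref y x) → (¬ pref y z ∧ ¬ pref z y) →
    (¬ pref x z ∧ ¬ pref z x)

/-- Convexity of a height function: every value below an attained value is attained. -/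
def Convex {D : Type} (h : D → ℕ) : Prop :=
  ∀ (x : D) (j : ℕ), j < h x → ∃ y : D, h y = j

/-- `pref` is ranked by the convex height function `h`. -/
def RankedBy {D : Type} (pref : D → D → Prop) (h : D → ℕ) : Prop :=
  Convex h ∧ ∀ x y : D, pref x y ↔ h x < h y

/-- `pref` is a ranked order. -/
def IsRanked {D : Type} (pref : D → D → Prop) : Prop :=
  ∃ h : D → ℕ, RankedBy pref h

/-- Statements: general or defeasible concept inclusions. -/
inductive Stmt (C R : Type) : Type where
  | gci : Concept C R → Concept C R → Stmt C R
  | dci : Concept C R → Concept C R → Stmt C R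

def PrefInterp.satStmt {C R D : Type} (P : PrefInterp C R D) : Stmt C R → Prop
  | .gci c d => P.satGCI c d
  | .dci c d => P.satDCI c d

/-- A defeasible knowledge base: a finite TBox and a finite DTBox
(both represented as sets of pairs of concepts). -/
structure KB (C R : Type) where
  tbox : Set (Concept C R × Concept C R)
  dbox : Set (Concept C R × Concept C R)
  tbox_finite : tbox.Finite
  dbox_finite : dbox.Finite

/-- The statements of a knowledge base. -/
def KB.stmts {C R : Type} (K : KB C R) : Set (Stmt C R) :=
  {s | (∃ p ∈ K.tbox, s = Stmt.gci p.1 p.2) ∨ (∃ p ∈ K.dbox, s = Stmt.dci p.1 p.2)}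

/-- A preferential model of a knowledge base. -/
def PrefInterp.isModel {C R D : Type} (P : PrefInterp C R D) (K : KB C R) : Prop :=
  (∀ p ∈ K.tbox, P.satGCI p.1 p.2) ∧ (∀ p ∈ K.dbox, P.satDCI p.1 p.2)

/-- Preferential entailment. -/
def prefEntails {C R : Type} (K : KB C R) (s : Stmt C R) : Prop :=
  ∀ (D : Type) (_ : Nonempty D) (P : PrefInterp C R D), P.isModel K → P.satStmt s

/-- Modular entailment. -/
def modEntails {C R : Type} (K : KB C R) (s : Stmt C R) : Prop :=
  ∀ (D : Type) (_ : Nonempty D) (P : PrefInterp C R D),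
    Modular P.pref → P.isModel K → P.satStmt s

/-- Modular entailment from a TBox `T` and a DTBox `Ds` (given as sets of pairs). -/
def modEntailsFrom {C R : Type} (T Ds : Set (Concept C R × Concept C R))
    (s : Stmt C R) : Prop :=
  ∀ (D : Type) (_ : Nonempty D) (P : PrefInterp C R D), Modular P.pref →
    (∀ p ∈ T, P.satGCI p.1 p.2) → (∀ p ∈ Ds, P.satDCI p.1 p.2) → P.satStmt s

/-- A concept `c` is exceptional w.r.t. `T ∪ Ds` if `T ∪ Ds ⊨_mod ⊤ ⊏∼ ¬c`. -/
def ExceptionalSem {C R : Type} (T Ds : Set (Concept C R × Concept C R))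
    (c : Concept C R) : Prop :=
  modEntailsFrom T Ds (Stmt.dci Concept.top (Concept.neg c))

/-- The iterated exceptionality sequence: `E 0 = Ds` and `E (n+1)` is the set of
DCIs of `E n` whose left-hand side is exceptional w.r.t. `T ∪ E n`
(so that `E i` is the DTBox of the knowledge base `K^i` of the ranking
construction, and `D^r_i = E i \ E (i+1)`). -/
def EseqSem {C R : Type} (T Ds : Set (Concept C R × Concept C R)) :
    ℕ → Set (Concept C R × Concept C R)
  | 0 => Ds
  | n + 1 => {p | p ∈ EseqSem T Ds n ∧ ExceptionalSem T (EseqSem T Ds n) p.1}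

/-- The rank of a concept: the least `n` such that `c` is not exceptional w.r.t.
`T ∪ E n` (where `E` is the iterated exceptionality sequence), and `⊤ = ∞` if `c`
is exceptional at every stage. -/
noncomputable def rankSem {C R : Type} (T Ds : Set (Concept C R × Concept C R))
    (c : Concept C R) : ℕ∞ :=
  sInf {x : ℕ∞ | ∃ n : ℕ, x = (n : ℕ∞) ∧ ¬ ExceptionalSem T (EseqSem T Ds n) c}

/-- Membership in the rational closure of `K`:
a DCI `c ⊏∼ d` is in the rational closure of `K` if
`rank_K(c ⊓ d) < rank_K(c ⊓ ¬d)` or `rank_K(c) = ∞`;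
a GCI `c ⊑ d` is in the rational closure of `K` if `rank_K(c ⊓ ¬d) = ∞`. -/
def inRatClosure {C R : Type} (K : KB C R) : Stmt C R → Prop
  | .dci c d =>
      rankSem K.tbox K.dbox (Concept.conj c d) <
        rankSem K.tbox K.dbox (Concept.conj c (Concept.neg d)) ∨
      rankSem K.tbox K.dbox c = ⊤
  | .gci c d => rankSem K.tbox K.dbox (Concept.conj c (Concept.neg d)) = ⊤

/-- Orders induced by a height function are smooth on every set. -/
theorem minSet_height_nonempty {D : Type} (g : D → ℕ) (S : Set D)
    (hS : S.Nonempty) : (minSet (fun x y => g x < g y) S).Nonempty := by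
  obtain ⟨x, hx⟩ := hS
  have hne : (g '' S).Nonempty := ⟨g x, x, hx, rfl⟩
  obtain ⟨y, hyS, hyg⟩ := Nat.sInf_mem hne
  refine ⟨y, hyS, ?_⟩
  intro z hz hlt
  have hle : sInf (g '' S) ≤ g z := Nat.sInf_le ⟨z, hz, rfl⟩
  omega

/-- The preferential interpretation determined by a classical interpretation and
a height function. -/
def ofHeight {C R D : Type} (I : ClassInterp C R D) (g : D → ℕ) :
    PrefInterp C R D where
  toClassInterp := I
  pref x y := g x < g y
  pref_irrefl _ := lt_irrefl _
  pref_trans _ _ _ h1 h2 := lt_trans h1 h2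
  smooth _ hc := minSet_height_nonempty g _ hc

/-- `Mod_Δ(K)`: the ranked models of `K` with domain `Δ`. -/
abbrev RankedModelOn {C R : Type} (Δ : Type) (K : KB C R) : Type :=
  {M : PrefInterp C R Δ // IsRanked M.pref ∧ M.isModel K}

/-- A height function witnessing rankedness. -/
noncomputable def heightFn {C R D : Type} (M : PrefInterp C R D)
    (h : IsRanked M.pref) : D → ℕ :=
  Classical.choose h

/-- The big ranked model of `K`: the ranked union of all ranked models of `K`
with domain `Δ`.  Its domain is the disjoint union of the domains, concept and
role names are interpreted componentwise (roles relate only elements of the same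
component), and each element keeps the height it has in its component. -/
noncomputable def bigModel {C R : Type} (Δ : Type) (K : KB C R) :
    PrefInterp C R (RankedModelOn Δ K × Δ) :=
  ofHeight
    { interpC := fun a => {p | p.2 ∈ p.1.val.interpC a}
      interpR := fun r p q => p.1 = q.1 ∧ p.1.val.interpR r p.2 q.2 }
    (fun p => heightFn p.1.val p.1.prop.1 p.2)

/-- Rational entailment: truth in the big ranked model of `K`. -/
def ratEntails {C R : Type} (Δ : Type) (K : KB C R) (s : Stmt C R) : Prop :=
  (bigModel Δ K).satStmt s

section RationalClosureProof

variable {C R : Type}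

private noncomputable def cenc (f : C → ℕ) (g : R → ℕ) : Concept C R → ℕ
  | .top => Nat.pair 0 0
  | .bot => Nat.pair 1 0
  | .atom a => Nat.pair 2 (f a)
  | .neg c => Nat.pair 3 (cenc f g c)
  | .conj c d => Nat.pair 4 (Nat.pair (cenc f g c) (cenc f g d))
  | .disj c d => Nat.pair 5 (Nat.pair (cenc f g c) (cenc f g d))
  | .ex r c => Nat.pair 6 (Nat.pair (g r) (cenc f g c))
  | .all r c => Nat.pair 7 (Nat.pair (g r) (cenc f g c))

private lemma cenc_inj {f : C → ℕ} {g : R → ℕ} (hf : Function.Injective f)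
    (hg : Function.Injective g) : Function.Injective (cenc f g) := by
  intro a
  induction a with
  | top => intro b h; cases b <;> (try rfl) <;> (simp only [cenc, Nat.pair_eq_pair] at h; omega)
  | bot => intro b h; cases b <;> (try rfl) <;> (simp only [cenc, Nat.pair_eq_pair] at h; omega)
  | atom a =>
      intro b h
      cases b <;> simp only [cenc, Nat.pair_eq_pair] at h <;> try omega
      exact congrArg Concept.atom (hf h.2)
  | neg c ih =>
      intro b h
      cases b <;> simp only [cenc, Nat.pair_eq_pair] at h <;> try omega
      exact congrArg Concept.neg (ih h.2)
  | conj c d ih1 ih2 =>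
      intro b h
      cases b <;> simp only [cenc, Nat.pair_eq_pair] at h <;> try omega
      rw [ih1 h.2.1, ih2 h.2.2]
  | disj c d ih1 ih2 =>
      intro b h
      cases b <;> simp only [cenc, Nat.pair_eq_pair] at h <;> try omega
      rw [ih1 h.2.1, ih2 h.2.2]
  | ex r c ih =>
      intro b h
      cases b <;> simp only [cenc, Nat.pair_eq_pair] at h <;> try omega
      rw [hg h.2.1, ih h.2.2]
  | all r c ih =>
      intro b h
      cases b <;> simp only [cenc, Nat.pair_eq_pair] at h <;> try omega
      rw [hg h.2.1, ih h.2.2]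

instance instCountableConcept [Countable C] [Countable R] : Countable (Concept C R) := by
  obtain ⟨f, hf⟩ := Countable.exists_injective_nat C
  obtain ⟨g, hg⟩ := Countable.exists_injective_nat R
  exact ⟨⟨cenc f g, cenc_inj hf hg⟩⟩

/-! ### Basic facts about `minSet` and height orders -/

lemma minSet_congr {D : Type} {p q : D → D → Prop} (h : ∀ x y, p x y ↔ q x y) (S : Set D) :
    minSet p S = minSet q S := by
  ext x
  exact and_congr_right fun _ => forall₂_congr fun y hy => not_congr (h y x)

lemma modular_height {D : Type} (g : D → ℕ) : Modular (fun x y : D => g x < g y) := by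
  intro x y z h1 h2; omega

lemma mem_minSet_height {D : Type} {g : D → ℕ} {S : Set D} {x : D} :
    x ∈ minSet (fun a b => g a < g b) S ↔ x ∈ S ∧ ∀ y ∈ S, g x ≤ g y := by
  unfold minSet
  simp only [Set.mem_setOf_eq, not_lt]

/-- In a nonempty subset of `ℕ`-heights the minimum is attained. -/
lemma exists_height_min {D : Type} (g : D → ℕ) {S : Set D} (hS : S.Nonempty) :
    ∃ y ∈ S, ∀ z ∈ S, g y ≤ g z := by
  obtain ⟨x, hx⟩ := hS
  have hne : (g '' S).Nonempty := ⟨g x, x, hx, rfl⟩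
  obtain ⟨y, hyS, hyg⟩ := Nat.sInf_mem hne
  exact ⟨y, hyS, fun z hz => by
    have : sInf (g '' S) ≤ g z := Nat.sInf_le ⟨z, hz, rfl⟩
    omega⟩

/-! ### Evaluation unfolding lemmas -/

@[simp] lemma eval_top {D : Type} (I : ClassInterp C R D) : I.eval .top = Set.univ := rfl
@[simp] lemma eval_bot {D : Type} (I : ClassInterp C R D) : I.eval .bot = ∅ := rfl
@[simp] lemma eval_atom {D : Type} (I : ClassInterp C R D) (a : C) :
    I.eval (.atom a) = I.interpC a := rfl
@[simp] lemma eval_neg {D : Type} (I : ClassInterp C R D) (c : Concept C R) :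
    I.eval (.neg c) = (I.eval c)ᶜ := rfl
@[simp] lemma eval_conj {D : Type} (I : ClassInterp C R D) (c d : Concept C R) :
    I.eval (.conj c d) = I.eval c ∩ I.eval d := rfl
@[simp] lemma eval_disj {D : Type} (I : ClassInterp C R D) (c d : Concept C R) :
    I.eval (.disj c d) = I.eval c ∪ I.eval d := rfl
lemma eval_ex {D : Type} (I : ClassInterp C R D) (r : R) (c : Concept C R) :
    I.eval (.ex r c) = {x | ∃ y, I.interpR r x y ∧ y ∈ I.eval c} := rfl
lemma eval_all {D : Type} (I : ClassInterp C R D) (r : R) (c : Concept C R) :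
    I.eval (.all r c) = {x | ∀ y, I.interpR r x y → y ∈ I.eval c} := rfl

/-! ### Pulling back interpretations along maps -/

def ClassInterp.comap {D E : Type} (I : ClassInterp C R E) (π : D → E) : ClassInterp C R D where
  interpC a := {x | π x ∈ I.interpC a}
  interpR r x y := I.interpR r (π x) (π y)

@[simp] lemma comap_interpC {D E : Type} (I : ClassInterp C R E) (π : D → E) (a : C) :
    (I.comap π).interpC a = {x | π x ∈ I.interpC a} := rfl
@[simp] lemma comap_interpR {D E : Type} (I : ClassInterp C R E) (π : D → E) (r : R) (x y : D) :
    (I.comap π).interpR r x y = I.interpR r (π x) (π y) := rfl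

lemma eval_comap {D E : Type} (I : ClassInterp C R E) (π : D → E)
    (hπ : Function.Surjective π) (q : Concept C R) :
    (I.comap π).eval q = π ⁻¹' (I.eval q) := by
  induction q with
  | top => simp
  | bot => simp
  | atom a => rfl
  | neg c ih => simp [ih]
  | conj c d ih1 ih2 => simp [ih1, ih2]
  | disj c d ih1 ih2 => simp [ih1, ih2]
  | ex r c ih =>
      ext x
      simp only [eval_ex, Set.mem_setOf_eq, Set.mem_preimage, ih, comap_interpR]
      constructor
      · rintro ⟨y, h1, h2⟩; exact ⟨π y, h1, h2⟩
      · rintro ⟨z, h1, h2⟩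
        obtain ⟨y, rfl⟩ := hπ z
        exact ⟨y, h1, h2⟩
  | all r c ih =>
      ext x
      simp only [eval_all, Set.mem_setOf_eq, Set.mem_preimage, ih, comap_interpR]
      constructor
      · intro h z hz
        obtain ⟨y, rfl⟩ := hπ z
        exact h y hz
      · intro h y hy; exact h (π y) hy

lemma minSet_comap {D E : Type} (π : D → E) (hπ : Function.Surjective π) (g : E → ℕ) (A : Set E) :
    minSet (fun a b : D => g (π a) < g (π b)) (π ⁻¹' A) ⊆
      π ⁻¹' (minSet (fun a b : E => g a < g b) A) := by
  rintro x ⟨hx, hmin⟩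
  refine ⟨hx, fun y hy hlt => ?_⟩
  obtain ⟨y', rfl⟩ := hπ y
  exact hmin y' hy hlt

/-! ### Restriction to a witness-closed subset -/

def ClassInterp.restrictS {D : Type} (I : ClassInterp C R D) (S : Set D) : ClassInterp C R S where
  interpC a := {x | (x : D) ∈ I.interpC a}
  interpR r x y := I.interpR r x y

@[simp] lemma restrictS_interpC {D : Type} (I : ClassInterp C R D) (S : Set D) (a : C) :
    (I.restrictS S).interpC a = {x : S | (x : D) ∈ I.interpC a} := rfl
@[simp] lemma restrictS_interpR {D : Type} (I : ClassInterp C R D) (S : Set D) (r : R) (x y : S) :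
    (I.restrictS S).interpR r x y = I.interpR r x y := rfl

lemma eval_restrictS {D : Type} (I : ClassInterp C R D) (S : Set D)
    (hex : ∀ x ∈ S, ∀ (r : R) (q : Concept C R),
      (∃ y, I.interpR r x y ∧ y ∈ I.eval q) → ∃ y ∈ S, I.interpR r x y ∧ y ∈ I.eval q)
    (hall : ∀ x ∈ S, ∀ (r : R) (q : Concept C R),
      (∃ y, I.interpR r x y ∧ y ∉ I.eval q) → ∃ y ∈ S, I.interpR r x y ∧ y ∉ I.eval q)
    (q : Concept C R) :
    (I.restrictS S).eval q = {x : S | (x : D) ∈ I.eval q} := by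
  induction q with
  | top => ext x; simp
  | bot => ext x; simp
  | atom a => rfl
  | neg c ih => ext x; simp [ih]
  | conj c d ih1 ih2 => ext x; simp [ih1, ih2]
  | disj c d ih1 ih2 => ext x; simp [ih1, ih2]
  | ex r c ih =>
      ext x
      simp only [eval_ex, Set.mem_setOf_eq, ih, restrictS_interpR]
      constructor
      · rintro ⟨y, h1, h2⟩; exact ⟨y, h1, h2⟩
      · intro hx
        obtain ⟨y, hyS, h1, h2⟩ := hex x x.2 r c hx
        exact ⟨⟨y, hyS⟩, h1, h2⟩
  | all r c ih =>
      ext x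
      simp only [eval_all, Set.mem_setOf_eq, ih, restrictS_interpR]
      constructor
      · intro h
        by_contra hno
        push_neg at hno
        obtain ⟨y, hy1, hy2⟩ := hno
        obtain ⟨y', hyS, h1, h2⟩ := hall x x.2 r c ⟨y, hy1, hy2⟩
        exact h2 (h ⟨y', hyS⟩ h1)
      · intro h y hy; exact h y hy

lemma exists_witness_closure {D : Type} [Countable C] [Countable R]
    (I : ClassInterp C R D) (seed : Set D) (hseed : seed.Countable) :
    ∃ S : Set D, seed ⊆ S ∧ S.Countable ∧
      (∀ x ∈ S, ∀ (r : R) (q : Concept C R),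
        (∃ y, I.interpR r x y ∧ y ∈ I.eval q) → ∃ y ∈ S, I.interpR r x y ∧ y ∈ I.eval q) ∧
      (∀ x ∈ S, ∀ (r : R) (q : Concept C R),
        (∃ y, I.interpR r x y ∧ y ∉ I.eval q) → ∃ y ∈ S, I.interpR r x y ∧ y ∉ I.eval q) := by
  classical
  set wit : D → R × Concept C R × Bool → D := fun x t =>
    if t.2.2 then
      (if h : ∃ y, I.interpR t.1 x y ∧ y ∈ I.eval t.2.1 then h.choose else x)
    else
      (if h : ∃ y, I.interpR t.1 x y ∧ y ∉ I.eval t.2.1 then h.choose else x) with hwit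
  let Sn : ℕ → Set D := fun n => Nat.rec seed
    (fun _ Sn => Sn ∪ ⋃ t : R × Concept C R × Bool, (fun x => wit x t) '' Sn) n
  have hcnt : ∀ n, (Sn n).Countable := by
    intro n
    induction n with
    | zero => exact hseed
    | succ n ih =>
        exact ih.union (Set.countable_iUnion fun t => ih.image _)
  refine ⟨⋃ n, Sn n, Set.subset_iUnion Sn 0, Set.countable_iUnion hcnt, ?_, ?_⟩
  · intro x hx r q hq
    obtain ⟨n, hn⟩ := Set.mem_iUnion.1 hx
    refine ⟨wit x (r, q, true), ?_, ?_⟩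
    · exact Set.mem_iUnion.2 ⟨n + 1, Or.inr (Set.mem_iUnion.2 ⟨(r, q, true), ⟨x, hn, rfl⟩⟩)⟩
    · simpa [hwit, hq] using hq.choose_spec
  · intro x hx r q hq
    obtain ⟨n, hn⟩ := Set.mem_iUnion.1 hx
    refine ⟨wit x (r, q, false), ?_, ?_⟩
    · exact Set.mem_iUnion.2 ⟨n + 1, Or.inr (Set.mem_iUnion.2 ⟨(r, q, false), ⟨x, hn, rfl⟩⟩)⟩
    · simpa [hwit, hq] using hq.choose_spec

/-! ### Union of interpretations -/

def unionInterp {D ι : Type} (f : ι → ClassInterp C R D) : ClassInterp C R (ι × D) where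
  interpC a := {p | p.2 ∈ (f p.1).interpC a}
  interpR r p q := p.1 = q.1 ∧ (f p.1).interpR r p.2 q.2

@[simp] lemma unionInterp_interpC {D ι : Type} (f : ι → ClassInterp C R D) (a : C) :
    (unionInterp f).interpC a = {p : ι × D | p.2 ∈ (f p.1).interpC a} := rfl
@[simp] lemma unionInterp_interpR {D ι : Type} (f : ι → ClassInterp C R D) (r : R)
    (p q : ι × D) :
    (unionInterp f).interpR r p q = (p.1 = q.1 ∧ (f p.1).interpR r p.2 q.2) := rfl

lemma eval_unionInterp {D ι : Type} (f : ι → ClassInterp C R D) (q : Concept C R) :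
    (unionInterp f).eval q = {p : ι × D | p.2 ∈ (f p.1).eval q} := by
  induction q with
  | top => ext p; simp
  | bot => ext p; simp
  | atom a => rfl
  | neg c ih => ext p; simp [ih]
  | conj c d ih1 ih2 => ext p; simp [ih1, ih2]
  | disj c d ih1 ih2 => ext p; simp [ih1, ih2]
  | ex r c ih =>
      ext p
      simp only [eval_ex, Set.mem_setOf_eq, ih, unionInterp_interpR]
      constructor
      · rintro ⟨y, ⟨he, h1⟩, h2⟩
        rw [← he] at h2
        exact ⟨y.2, h1, h2⟩
      · rintro ⟨y, h1, h2⟩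
        exact ⟨(p.1, y), ⟨rfl, h1⟩, h2⟩
  | all r c ih =>
      ext p
      simp only [eval_all, Set.mem_setOf_eq, ih, unionInterp_interpR]
      constructor
      · intro h y hy
        exact h (p.1, y) ⟨rfl, hy⟩
      · rintro h y ⟨he, h1⟩
        rw [← he]
        exact h y.2 h1


/-! ### Normalising a height function to a convex one -/

noncomputable def normv {D : Type} (g : D → ℕ) (x : D) : ℕ :=
  Set.ncard {k | k ∈ Set.range g ∧ k < g x}

lemma normv_finite_aux {D : Type} (g : D → ℕ) (x : D) :
    {k | k ∈ Set.range g ∧ k < g x}.Finite :=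
  (Set.finite_Iio (g x)).subset fun _ hk => hk.2

lemma normv_lt_iff {D : Type} (g : D → ℕ) (x y : D) :
    normv g x < normv g y ↔ g x < g y := by
  have key : ∀ a b : D, g a < g b → normv g a < normv g b := by
    intro a b hab
    have hsub : {k | k ∈ Set.range g ∧ k < g a} ⊂ {k | k ∈ Set.range g ∧ k < g b} := by
      constructor
      · intro k hk; exact ⟨hk.1, hk.2.trans hab⟩
      · intro hcon
        have : g a ∈ {k | k ∈ Set.range g ∧ k < g a} := hcon ⟨⟨a, rfl⟩, hab⟩
        exact lt_irrefl _ this.2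
    exact Set.ncard_lt_ncard hsub (normv_finite_aux g b)
  constructor
  · intro h
    rcases lt_trichotomy (g x) (g y) with hc | hc | hc
    · exact hc
    · exfalso; unfold normv at h; rw [hc] at h; exact lt_irrefl _ h
    · exact absurd h (by have := key _ _ hc; omega)
  · exact key x y

lemma normv_le {D : Type} (g : D → ℕ) (x : D) : normv g x ≤ g x := by
  have h1 : normv g x ≤ (Set.Iio (g x)).ncard :=
    Set.ncard_le_ncard (fun k hk => hk.2) (Set.finite_Iio (g x))
  have h2 : (Set.Iio (g x)).ncard = g x := by
    rw [← Finset.coe_Iio, Set.ncard_coe_finset, Nat.card_Iio]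
  omega

lemma normv_convex {D : Type} (g : D → ℕ) : Convex (normv g) := by
  have key : ∀ n (x : D), g x = n → ∀ j, j < normv g x → ∃ y, normv g y = j := by
    intro n
    induction n using Nat.strong_induction_on with
    | _ n IH =>
      intro x hgx j hj
      have hAfin : {k | k ∈ Set.range g ∧ k < g x}.Finite := normv_finite_aux g x
      have hAne : {k | k ∈ Set.range g ∧ k < g x}.Nonempty := by
        rw [← Set.ncard_pos hAfin]
        have : j < normv g x := hj
        unfold normv at this
        omega
      obtain ⟨v, hvA, hvmax⟩ := Set.exists_max_image _ id hAfin hAne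
      obtain ⟨y, hy⟩ := hvA.1
      have hyx : g y < g x := by rw [hy]; exact hvA.2
      have hAy : {k | k ∈ Set.range g ∧ k < g y} =
          {k | k ∈ Set.range g ∧ k < g x} \ {v} := by
        ext k
        simp only [Set.mem_setOf_eq, Set.mem_diff, Set.mem_singleton_iff]
        constructor
        · rintro ⟨hk1, hk2⟩
          rw [hy] at hk2
          exact ⟨⟨hk1, hk2.trans hvA.2⟩, by omega⟩
        · rintro ⟨⟨hk1, hk2⟩, hkv⟩
          have := hvmax k ⟨hk1, hk2⟩
          simp only [id] at this
          rw [hy]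
          exact ⟨hk1, by omega⟩
      have hcard : normv g y = normv g x - 1 := by
        unfold normv
        rw [hAy, Set.ncard_diff_singleton_of_mem hvA]
      rcases Nat.lt_or_ge j (normv g y) with hc | hc
      · exact IH (g y) (by omega) y rfl j hc
      · exact ⟨y, by omega⟩
  intro x j hj
  exact key (g x) x rfl j hj

lemma rankedBy_unique {D : Type} {pref : D → D → Prop} {h h' : D → ℕ}
    (H : RankedBy pref h) (H' : RankedBy pref h') (x : D) : h x = h' x := by
  obtain ⟨Hc, Hl⟩ := H
  obtain ⟨Hc', Hl'⟩ := H'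
  have iff1 : ∀ a b : D, h a < h b ↔ h' a < h' b := fun a b =>
    (Hl a b).symm.trans (Hl' a b)
  have key : ∀ k, ∀ x : D, h x = k → h' x = k := by
    intro k
    induction k using Nat.strong_induction_on with
    | _ k IH =>
      intro x hx
      rcases Nat.eq_zero_or_pos k with h0 | hpos
      · subst h0
        by_contra hne
        obtain ⟨y, hy⟩ := Hc' x 0 (Nat.pos_of_ne_zero hne)
        have : h y < h x := (iff1 y x).mpr (by omega)
        omega
      · obtain ⟨y, hy⟩ := Hc x (k - 1) (by omega)
        have hy' : h' y = k - 1 := IH (k - 1) (by omega) y hy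
        have h1 : h' y < h' x := (iff1 y x).mp (by omega)
        by_contra hne
        have h2 : k < h' x := by omega
        obtain ⟨z, hz⟩ := Hc' x k h2
        have hz1 : h y < h z := (iff1 y z).mpr (by omega)
        have hz2 : h z < h x := (iff1 z x).mpr (by omega)
        omega
  exact (key (h x) x rfl).symm

/-! ### The exceptionality sequence -/

lemma eseq_subset (T Ds : Set (Concept C R × Concept C R)) :
    ∀ i, EseqSem T Ds i ⊆ Ds := by
  intro i
  induction i with
  | zero => exact fun p hp => hp
  | succ i ih => exact fun p hp => ih hp.1

lemma mem_eseq_iff (T Ds : Set (Concept C R × Concept C R)) (p : Concept C R × Concept C R) :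
    ∀ i, (p ∈ EseqSem T Ds i ↔
      p ∈ Ds ∧ ∀ k < i, ExceptionalSem T (EseqSem T Ds k) p.1) := by
  intro i
  induction i with
  | zero => simp [EseqSem]
  | succ i ih =>
    constructor
    · intro hp
      have hp' : p ∈ EseqSem T Ds i ∧ ExceptionalSem T (EseqSem T Ds i) p.1 := hp
      obtain ⟨hD, hall⟩ := ih.mp hp'.1
      refine ⟨hD, fun k hk => ?_⟩
      rcases Nat.lt_succ_iff_lt_or_eq.mp hk with hlt | heq
      · exact hall k hlt
      · subst heq; exact hp'.2
    · rintro ⟨hD, hall⟩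
      exact ⟨ih.mpr ⟨hD, fun k hk => hall k (hk.trans (Nat.lt_succ_self i))⟩,
        hall i (Nat.lt_succ_self i)⟩

/-! ### Minimal heights along the exceptionality sequence -/

lemma eseq_min_height {D : Type} [Nonempty D] {T Ds' : Set (Concept C R × Concept C R)}
    (I : ClassInterp C R D) (h : D → ℕ)
    (hT : ∀ p ∈ T, I.eval p.1 ⊆ I.eval p.2)
    (hD : ∀ p ∈ Ds', minSet (fun a b : D => h a < h b) (I.eval p.1) ⊆ I.eval p.2) :
    ∀ i, ∀ p ∈ EseqSem T Ds' i, ∀ x ∈ I.eval p.1, i ≤ h x := by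
  intro i
  induction i with
  | zero => intro p _ x _; exact Nat.zero_le _
  | succ i IH =>
    intro p hp x hx
    have hp' : p ∈ EseqSem T Ds' i ∧ ExceptionalSem T (EseqSem T Ds' i) p.1 := hp
    by_contra hlt
    push_neg at hlt
    have hsat := hp'.2 D inferInstance (ofHeight I fun z => h z - i)
      (modular_height _) (fun q hq => hT q hq)
      (fun q hq => by
        intro z hz
        have hz' : z ∈ I.eval q.1 ∧ ∀ y ∈ I.eval q.1, ¬ (h y - i < h z - i) := hz
        refine hD q (eseq_subset T Ds' i hq) ⟨hz'.1, fun y hy hlt2 => ?_⟩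
        have hyi := IH q hq y hy
        have hzi := IH q hq z hz'.1
        exact hz'.2 y hy (by omega))
    have hxmin : x ∈ minSet (fun a b : D => (h a - i) < (h b - i))
        (I.eval Concept.top) :=
      ⟨trivial, fun y _ hlt2 => by omega⟩
    exact hsat hxmin hx

lemma rank_le_height {D : Type} [Nonempty D]
    (T Ds : Set (Concept C R × Concept C R))
    (I : ClassInterp C R D) (h : D → ℕ)
    (hT : ∀ p ∈ T, I.eval p.1 ⊆ I.eval p.2)
    (hD : ∀ p ∈ Ds, minSet (fun a b : D => h a < h b) (I.eval p.1) ⊆ I.eval p.2)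
    (e : Concept C R) (x : D) (hx : x ∈ I.eval e) :
    rankSem T Ds e ≤ (h x : ℕ∞) := by
  by_cases hex : ∃ j ≤ h x, ¬ ExceptionalSem T (EseqSem T Ds j) e
  · obtain ⟨j, hj, hne⟩ := hex
    exact le_trans (sInf_le ⟨j, rfl, hne⟩) (Nat.cast_le.mpr hj)
  · push_neg at hex
    exfalso
    have hExc := hex (h x) le_rfl
    have hsat := hExc D inferInstance (ofHeight I fun z => h z - h x)
      (modular_height _) (fun q hq => hT q hq)
      (fun q hq => by
        intro z hz
        have hz' : z ∈ I.eval q.1 ∧ ∀ y ∈ I.eval q.1, ¬ (h y - h x < h z - h x) := hz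
        refine hD q (eseq_subset T Ds (h x) hq) ⟨hz'.1, fun y hy hlt2 => ?_⟩
        have hyi := eseq_min_height I h hT hD (h x) q hq y hy
        have hzi := eseq_min_height I h hT hD (h x) q hq z hz'.1
        exact hz'.2 y hy (by omega))
    have hxmin : x ∈ minSet (fun a b : D => (h a - h x) < (h b - h x))
        (I.eval Concept.top) :=
      ⟨trivial, fun y _ hlt2 => by omega⟩
    exact hsat hxmin hx

/-! ### Converting a modular model into a height-based one -/

noncomputable def cnt {D : Type} (P : PrefInterp C R D) (F : Set (Concept C R)) (x : D) : ℕ :=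
  Set.ncard {q | q ∈ F ∧ ∃ y ∈ minSet P.pref (P.toClassInterp.eval q), P.pref y x}

lemma cnt_min_subset {D : Type} (P : PrefInterp C R D) (hmod : Modular P.pref)
    {F : Set (Concept C R)} (hF : F.Finite) {q : Concept C R} (hq : q ∈ F) :
    minSet (fun a b : D => cnt P F a < cnt P F b) (P.toClassInterp.eval q) ⊆
      minSet P.pref (P.toClassInterp.eval q) := by
  intro x hx
  obtain ⟨hxS, hxmin⟩ := hx
  by_contra hxnot
  have hz : ∃ z ∈ P.toClassInterp.eval q, P.pref z x := by
    by_contra hcon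
    push_neg at hcon
    exact hxnot ⟨hxS, hcon⟩
  obtain ⟨z, hzS, hzx⟩ := hz
  obtain ⟨w, hwmin⟩ := P.smooth q ⟨x, hxS⟩
  have hwx : ∃ w', w' ∈ minSet P.pref (P.toClassInterp.eval q) ∧ P.pref w' x := by
    by_cases h1 : P.pref w x
    · exact ⟨w, hwmin, h1⟩
    · by_cases h2 : P.pref x w
      · exact absurd h2 (hwmin.2 x hxS)
      · by_cases h3 : P.pref w z
        · exact ⟨w, hwmin, P.pref_trans _ _ _ h3 hzx⟩
        · exfalso
          have h4 : ¬ P.pref z w := hwmin.2 z hzS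
          have := hmod z w x ⟨h4, h3⟩ ⟨h1, h2⟩
          exact this.1 hzx
  obtain ⟨w', hw'min, hw'x⟩ := hwx
  have hsub : {q' | q' ∈ F ∧ ∃ y ∈ minSet P.pref (P.toClassInterp.eval q'), P.pref y w'} ⊂
      {q' | q' ∈ F ∧ ∃ y ∈ minSet P.pref (P.toClassInterp.eval q'), P.pref y x} := by
    constructor
    · rintro q' ⟨hq'F, y, hy1, hy2⟩
      exact ⟨hq'F, y, hy1, P.pref_trans _ _ _ hy2 hw'x⟩
    · intro hcon
      have hmem : q ∈ {q' | q' ∈ F ∧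
          ∃ y ∈ minSet P.pref (P.toClassInterp.eval q'), P.pref y x} :=
        ⟨hq, w', hw'min, hw'x⟩
      obtain ⟨-, y, hy1, hy2⟩ := hcon hmem
      exact hw'min.2 y hy1.1 hy2
  have hfin : {q' | q' ∈ F ∧
      ∃ y ∈ minSet P.pref (P.toClassInterp.eval q'), P.pref y x}.Finite :=
    hF.subset fun q' hq' => hq'.1
  exact hxmin w' hw'min.1 (Set.ncard_lt_ncard hsub hfin)

lemma cnt_eq_zero {D : Type} (P : PrefInterp C R D) (F : Set (Concept C R)) (x : D)
    (hx : ∀ y, ¬ P.pref y x) : cnt P F x = 0 := by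
  have hempty : {q | q ∈ F ∧
      ∃ y ∈ minSet P.pref (P.toClassInterp.eval q), P.pref y x} = ∅ := by
    ext q
    simp only [Set.mem_setOf_eq, Set.mem_empty_iff_false, iff_false, not_and]
    rintro - ⟨y, -, hy⟩
    exact hx y hy
  rw [cnt, hempty, Set.ncard_empty]


/-! ### Realising a non-exceptional concept in a height model on `Δ` -/

lemma exists_component [Countable C] [Countable R]
    (Δ : Type) [Countable Δ] [Infinite Δ]
    (T Ds' : Set (Concept C R × Concept C R)) (hDs' : Ds'.Finite) (c' : Concept C R)
    (hne : ¬ ExceptionalSem T Ds' c') :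
    ∃ (I : ClassInterp C R Δ) (g : Δ → ℕ) (x : Δ),
      g x = 0 ∧ x ∈ I.eval c' ∧
      (∀ p ∈ T, I.eval p.1 ⊆ I.eval p.2) ∧
      (∀ p ∈ Ds', minSet (fun a b : Δ => g a < g b) (I.eval p.1) ⊆ I.eval p.2) := by
  classical
  unfold ExceptionalSem modEntailsFrom at hne
  push_neg at hne
  obtain ⟨D, hD, P, hmod, hT, hDsat, hnot⟩ := hne
  haveI : Nonempty D := hD
  unfold PrefInterp.satStmt PrefInterp.satDCI at hnot
  rw [Set.not_subset] at hnot
  obtain ⟨x0, hx0min, hx0c⟩ := hnot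
  have hx0c' : x0 ∈ P.toClassInterp.eval c' := by
    simpa using hx0c
  have hx0nopred : ∀ y : D, ¬ P.pref y x0 := fun y => hx0min.2 y trivial
  set F := Prod.fst '' Ds' with hFdef
  have hFfin : F.Finite := hDs'.image Prod.fst
  set g1 := cnt P F with hg1
  have hkey : ∀ p ∈ Ds', minSet (fun a b : D => g1 a < g1 b) (P.toClassInterp.eval p.1) ⊆
      P.toClassInterp.eval p.2 := fun p hp =>
    le_trans (cnt_min_subset P hmod hFfin ⟨p, hp, rfl⟩) (hDsat p hp)
  have hg1x0 : g1 x0 = 0 := cnt_eq_zero P F x0 hx0nopred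
  have hwminex : ∀ p : Concept C R × Concept C R, ∃ w : D,
      (P.toClassInterp.eval p.1).Nonempty →
        w ∈ P.toClassInterp.eval p.1 ∧ ∀ z ∈ P.toClassInterp.eval p.1, g1 w ≤ g1 z := by
    intro p
    by_cases hp : (P.toClassInterp.eval p.1).Nonempty
    · obtain ⟨w, hw1, hw2⟩ := exists_height_min g1 hp
      exact ⟨w, fun _ => ⟨hw1, hw2⟩⟩
    · exact ⟨x0, fun hcon => absurd hcon hp⟩
  choose wmin hwmin using hwminex
  have hseedcnt : (insert x0 (wmin '' Ds') : Set D).Countable :=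
    ((hDs'.image wmin).countable).insert x0
  obtain ⟨S, hseedS, hScnt, hexw, hallw⟩ :=
    exists_witness_closure P.toClassInterp (insert x0 (wmin '' Ds')) hseedcnt
  have hx0S : x0 ∈ S := hseedS (Set.mem_insert _ _)
  set I0 := P.toClassInterp.restrictS S with hI0
  have hevalR : ∀ q, I0.eval q = {x : S | (x : D) ∈ P.toClassInterp.eval q} :=
    eval_restrictS _ S hexw hallw
  haveI : Countable S := hScnt.to_subtype
  haveI : Nonempty S := ⟨⟨x0, hx0S⟩⟩
  obtain ⟨f0, hf0⟩ := exists_surjective_nat S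
  obtain ⟨eΔ⟩ : Nonempty (Δ ≃ ℕ) := nonempty_equiv_of_countable
  set π : Δ → S := f0 ∘ eΔ with hπdef
  have hπ : Function.Surjective π := hf0.comp eΔ.surjective
  obtain ⟨n0, hn0⟩ := hf0 ⟨x0, hx0S⟩
  refine ⟨I0.comap π, fun z => g1 ((π z : S) : D), eΔ.symm n0, ?_, ?_, ?_, ?_⟩
  · show g1 ((π (eΔ.symm n0) : S) : D) = 0
    have : π (eΔ.symm n0) = ⟨x0, hx0S⟩ := by
      simp [hπdef, hn0]
    rw [this]
    exact hg1x0
  · rw [eval_comap _ _ hπ, Set.mem_preimage]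
    have : π (eΔ.symm n0) = ⟨x0, hx0S⟩ := by
      simp [hπdef, hn0]
    rw [this, hevalR]
    exact hx0c'
  · intro p hp z hz
    rw [eval_comap _ _ hπ, Set.mem_preimage, hevalR] at hz ⊢
    exact hT p hp hz
  · intro p hp
    have step2 : minSet (fun a b : S => g1 (a : D) < g1 (b : D)) (I0.eval p.1) ⊆
        I0.eval p.2 := by
      rintro z ⟨hz1, hz2⟩
      rw [hevalR] at hz1
      have hne1 : (P.toClassInterp.eval p.1).Nonempty := ⟨(z : D), hz1⟩
      obtain ⟨hw1, hw2⟩ := hwmin p hne1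
      have hwS : wmin p ∈ S := hseedS (Set.mem_insert_of_mem _ ⟨p, hp, rfl⟩)
      have hwz : ¬ g1 (wmin p) < g1 (z : D) := by
        refine hz2 ⟨wmin p, hwS⟩ ?_
        rw [hevalR]
        exact hw1
      have hzmin : (z : D) ∈ minSet (fun a b : D => g1 a < g1 b)
          (P.toClassInterp.eval p.1) := by
        refine ⟨hz1, fun y hy hlt => ?_⟩
        have := hw2 y hy
        omega
      rw [hevalR]
      exact hkey p hp hzmin
    intro z hz
    rw [eval_comap _ _ hπ] at hz ⊢
    rw [Set.mem_preimage]
    refine step2 ?_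
    exact minSet_comap π hπ (fun s : S => g1 (s : D)) (I0.eval p.1) hz


/-! ### Building a ranked model of `K` realising a concept at a low height -/

lemma exists_low_element [Countable C] [Countable R]
    (Δ : Type) [Countable Δ] [Infinite Δ] (K : KB C R) (e : Concept C R) (n : ℕ)
    (hn : ¬ ExceptionalSem K.tbox (EseqSem K.tbox K.dbox n) e) :
    ∃ (M : RankedModelOn Δ K) (x : Δ),
      x ∈ M.val.toClassInterp.eval e ∧ heightFn M.val M.prop.1 x ≤ n := by
  classical
  have hEfin : ∀ j, (EseqSem K.tbox K.dbox j).Finite :=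
    fun j => K.dbox_finite.subset (eseq_subset K.tbox K.dbox j)
  set T := K.tbox with hT
  set Ds := K.dbox with hDs
  set Drops : ℕ × (Concept C R × Concept C R) → Prop := fun jq =>
    jq.1 ≤ n ∧ jq.2 ∈ EseqSem T Ds jq.1 ∧
      ¬ ExceptionalSem T (EseqSem T Ds jq.1) jq.2.1 with hDropsDef
  set stage : Option (ℕ × (Concept C R × Concept C R)) → ℕ := fun i =>
    match i with
    | none => n
    | some jq => if Drops jq then jq.1 else n with hstageDef
  have hstagele : ∀ i, stage i ≤ n := by
    intro i
    cases i with
    | none => exact le_rfl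
    | some jq =>
        show (if Drops jq then jq.1 else n) ≤ n
        split_ifs with h
        · exact h.1
        · exact le_rfl
  have hcomp : ∀ i : Option (ℕ × (Concept C R × Concept C R)),
      ∃ (I : ClassInterp C R Δ) (g : Δ → ℕ),
        (∀ p ∈ T, I.eval p.1 ⊆ I.eval p.2) ∧
        (∀ p ∈ EseqSem T Ds (stage i),
          minSet (fun a b : Δ => g a < g b) (I.eval p.1) ⊆ I.eval p.2) ∧
        (match i with
         | none => ∃ x, g x = 0 ∧ x ∈ I.eval e
         | some jq => Drops jq → ∃ x, g x = 0 ∧ x ∈ I.eval jq.2.1) := by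
    intro i
    match i with
    | none =>
        obtain ⟨I, g, x, hx0, hxe, hTs, hDs2⟩ :=
          exists_component Δ T (EseqSem T Ds n) (hEfin n) e hn
        exact ⟨I, g, hTs, hDs2, ⟨x, hx0, hxe⟩⟩
    | some jq =>
        by_cases hd : Drops jq
        · obtain ⟨I, g, x, hx0, hxq, hTs, hDs2⟩ :=
            exists_component Δ T (EseqSem T Ds jq.1) (hEfin jq.1) jq.2.1 hd.2.2
          refine ⟨I, g, hTs, ?_, fun _ => ⟨x, hx0, hxq⟩⟩
          have hst : stage (some jq) = jq.1 := by
            show (if Drops jq then jq.1 else n) = jq.1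
            rw [if_pos hd]
          rw [hst]
          exact hDs2
        · obtain ⟨I, g, x, hx0, hxe, hTs, hDs2⟩ :=
            exists_component Δ T (EseqSem T Ds n) (hEfin n) e hn
          refine ⟨I, g, hTs, ?_, fun hcon => absurd hcon hd⟩
          have hst : stage (some jq) = n := by
            show (if Drops jq then jq.1 else n) = n
            rw [if_neg hd]
          rw [hst]
          exact hDs2
  choose If gf hfT hfD hfreal using hcomp
  set G : Option (ℕ × (Concept C R × Concept C R)) × Δ → ℕ :=
    fun p => stage p.1 + gf p.1 p.2 with hGdef
  set IU := unionInterp If with hIUdef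
  have hUT : ∀ p ∈ T, IU.eval p.1 ⊆ IU.eval p.2 := by
    intro p hp z hz
    rw [eval_unionInterp] at hz ⊢
    exact hfT z.1 p hp hz
  have hUD : ∀ p ∈ Ds, minSet (fun a b => G a < G b) (IU.eval p.1) ⊆ IU.eval p.2 := by
    rintro p hp z ⟨hz1, hz2⟩
    rw [eval_unionInterp] at hz1
    have hmemE : p ∈ EseqSem T Ds (stage z.1) := by
      rw [mem_eseq_iff]
      refine ⟨hp, fun k hk => ?_⟩
      by_contra hkexc
      have hNne : {m | ¬ ExceptionalSem T (EseqSem T Ds m) p.1}.Nonempty := ⟨k, hkexc⟩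
      set r := sInf {m | ¬ ExceptionalSem T (EseqSem T Ds m) p.1} with hrdef
      have hrmem : ¬ ExceptionalSem T (EseqSem T Ds r) p.1 := Nat.sInf_mem hNne
      have hrle : r ≤ k := Nat.sInf_le
        (show k ∈ {m | ¬ ExceptionalSem T (EseqSem T Ds m) p.1} from hkexc)
      have hrE : p ∈ EseqSem T Ds r := by
        rw [mem_eseq_iff]
        refine ⟨hp, fun k' hk' => ?_⟩
        by_contra hcon
        exact absurd (Nat.sInf_le
          (show k' ∈ {m | ¬ ExceptionalSem T (EseqSem T Ds m) p.1} from hcon)) (by omega)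
      have hdrop : Drops (r, p) := ⟨by have := hstagele z.1; omega, hrE, hrmem⟩
      obtain ⟨x1, hx10, hx1q⟩ := hfreal (some (r, p)) hdrop
      have hx1mem : ((some (r, p) : Option _), x1) ∈ IU.eval p.1 := by
        rw [eval_unionInterp]; exact hx1q
      have hnlt := hz2 _ hx1mem
      have hst : stage (some (r, p)) = r := by
        show (if Drops (r, p) then r else n) = r
        rw [if_pos hdrop]
      have hGx1 : G ((some (r, p) : Option _), x1) = r := by
        show stage (some (r, p)) + gf (some (r, p)) x1 = r
        rw [hst, hx10]
        omega
      have hGz : stage z.1 ≤ G z := Nat.le_add_right _ _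
      exact hnlt (by omega)
    have hlocmin : z.2 ∈ minSet (fun a b : Δ => gf z.1 a < gf z.1 b) ((If z.1).eval p.1) := by
      refine ⟨hz1, fun y hy hlt => ?_⟩
      refine hz2 (z.1, y) (by rw [eval_unionInterp]; exact hy) ?_
      show stage z.1 + gf z.1 y < stage z.1 + gf z.1 z.2
      omega
    rw [eval_unionInterp]
    exact hfD z.1 p hmemE hlocmin
  obtain ⟨xe, hxe0, hxee⟩ := hfreal none
  haveI : Nonempty (Option (ℕ × (Concept C R × Concept C R)) × Δ) := ⟨(none, xe)⟩
  obtain ⟨f0, hf0⟩ := exists_surjective_nat (Option (ℕ × (Concept C R × Concept C R)) × Δ)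
  obtain ⟨eΔ⟩ : Nonempty (Δ ≃ ℕ) := nonempty_equiv_of_countable
  set π : Δ → Option (ℕ × (Concept C R × Concept C R)) × Δ := f0 ∘ eΔ with hπdef
  have hπ : Function.Surjective π := hf0.comp eΔ.surjective
  set Ifin := IU.comap π with hIfindef
  set gfin : Δ → ℕ := fun z => G (π z) with hgfindef
  set M : PrefInterp C R Δ := ofHeight Ifin (normv gfin) with hMdef
  have hrb : RankedBy M.pref (normv gfin) := ⟨normv_convex gfin, fun a b => Iff.rfl⟩
  have hRanked : IsRanked M.pref := ⟨normv gfin, hrb⟩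
  have hModel : M.isModel K := by
    constructor
    · intro p hp z hz
      have hz' : z ∈ (IU.comap π).eval p.1 := hz
      rw [eval_comap _ _ hπ, Set.mem_preimage] at hz'
      show z ∈ (IU.comap π).eval p.2
      rw [eval_comap _ _ hπ, Set.mem_preimage]
      exact hUT p hp hz'
    · intro p hp z hz
      obtain ⟨h1, h2⟩ := hz
      have hz' : z ∈ minSet (fun a b : Δ => G (π a) < G (π b)) ((IU.comap π).eval p.1) :=
        ⟨h1, fun y hy hlt => h2 y hy ((normv_lt_iff gfin y z).mpr hlt)⟩
      have heq := eval_comap IU π hπ p.1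
      rw [heq] at hz'
      have hmem := minSet_comap π hπ G (IU.eval p.1) hz'
      rw [Set.mem_preimage] at hmem
      show z ∈ (IU.comap π).eval p.2
      rw [eval_comap _ _ hπ, Set.mem_preimage]
      exact hUD p hp hmem
  obtain ⟨m0, hm0⟩ := hf0 (none, xe)
  have hπx : π (eΔ.symm m0) = (none, xe) := by
    show f0 (eΔ (eΔ.symm m0)) = (none, xe)
    rw [Equiv.apply_symm_apply]
    exact hm0
  refine ⟨⟨M, hRanked, hModel⟩, eΔ.symm m0, ?_, ?_⟩
  · show eΔ.symm m0 ∈ (IU.comap π).eval e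
    rw [eval_comap _ _ hπ, Set.mem_preimage, hπx, eval_unionInterp]
    exact hxee
  · have h1 : heightFn M hRanked (eΔ.symm m0) = normv gfin (eΔ.symm m0) :=
      rankedBy_unique (Classical.choose_spec hRanked) hrb (eΔ.symm m0)
    have h2 : normv gfin (eΔ.symm m0) ≤ gfin (eΔ.symm m0) := normv_le _ _
    have h3 : gfin (eΔ.symm m0) = n := by
      have hGG : gfin (eΔ.symm m0) = G (none, xe) := by
        show G (π (eΔ.symm m0)) = G (none, xe)
        rw [hπx]
      refine hGG.trans ?_
      show stage none + gf none xe = n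
      rw [hxe0]
      show n + 0 = n
      omega
    show heightFn M hRanked (eΔ.symm m0) ≤ n
    omega


end RationalClosureProof


/-- characterisation of rational closure: for a defeasible knowledge
base `K` having a modular model, a statement is in the rational closure of `K` iff
`K` rationally entails it, i.e. the big ranked model of `K` satisfies it. -/
theorem ratClosure_iff_ratEntails {C R : Type} [Finite C] [Finite R]
    (Δ : Type) [Countable Δ] [Infinite Δ] (K : KB C R)
    (hK : ∃ (D : Type) (_ : Nonempty D) (M : PrefInterp C R D),
      Modular M.pref ∧ M.isModel K)
    (s : Stmt C R) :
    inRatClosure K s ↔ ratEntails Δ K s := by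
  classical
  clear hK
  set T := K.tbox with hTdef
  set Ds := K.dbox with hDsdef
  set O := bigModel Δ K with hOdef
  set OH : RankedModelOn Δ K × Δ → ℕ := fun p => heightFn p.1.val p.1.prop.1 p.2 with hOHdef
  have hevalO : ∀ q : Concept C R, O.toClassInterp.eval q =
      {p : RankedModelOn Δ K × Δ | p.2 ∈ p.1.val.toClassInterp.eval q} := fun q =>
    eval_unionInterp (fun M : RankedModelOn Δ K => M.val.toClassInterp) q
  have hL1 : ∀ (q : Concept C R) (p : RankedModelOn Δ K × Δ),
      p ∈ O.toClassInterp.eval q → rankSem T Ds q ≤ (OH p : ℕ∞) := by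
    intro q p hp
    rw [hevalO] at hp
    have hrbM : RankedBy p.1.val.pref (heightFn p.1.val p.1.prop.1) :=
      Classical.choose_spec p.1.prop.1
    have hTM : ∀ r ∈ T, p.1.val.toClassInterp.eval r.1 ⊆ p.1.val.toClassInterp.eval r.2 :=
      p.1.prop.2.1
    have hDM : ∀ r ∈ Ds,
        minSet (fun a b : Δ => heightFn p.1.val p.1.prop.1 a < heightFn p.1.val p.1.prop.1 b)
          (p.1.val.toClassInterp.eval r.1) ⊆ p.1.val.toClassInterp.eval r.2 := by
      intro r hr z hz
      have heqm := minSet_congr (fun a b : Δ => hrbM.2 a b)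
        (p.1.val.toClassInterp.eval r.1)
      rw [← heqm] at hz
      exact p.1.prop.2.2 r hr hz
    exact rank_le_height T Ds p.1.val.toClassInterp (heightFn p.1.val p.1.prop.1)
      hTM hDM q p.2 hp
  have hL2 : ∀ (q : Concept C R) (m : ℕ), ¬ ExceptionalSem T (EseqSem T Ds m) q →
      ∃ p : RankedModelOn Δ K × Δ, p ∈ O.toClassInterp.eval q ∧ OH p ≤ m := by
    intro q m hm
    obtain ⟨M, x, hx1, hx2⟩ := exists_low_element Δ K q m hm
    refine ⟨(M, x), ?_, hx2⟩
    rw [hevalO]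
    exact hx1
  set η : Concept C R → ℕ∞ := fun q =>
    sInf ((fun p => (OH p : ℕ∞)) '' (O.toClassInterp.eval q)) with hηdef
  have hrankeq : ∀ q, rankSem T Ds q = η q := by
    intro q
    apply le_antisymm
    · refine le_sInf ?_
      rintro x ⟨p, hp, rfl⟩
      exact hL1 q p hp
    · refine le_sInf ?_
      rintro x ⟨m, rfl, hm⟩
      obtain ⟨p, hp, hpm⟩ := hL2 q m hm
      exact le_trans (sInf_le ⟨p, hp, rfl⟩) (Nat.cast_le.mpr hpm)
  have hempty : ∀ q, (η q = ⊤ ↔ O.toClassInterp.eval q = ∅) := by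
    intro q
    constructor
    · intro h
      by_contra hne
      obtain ⟨p, hp⟩ := Set.nonempty_iff_ne_empty.mpr hne
      rw [hηdef, sInf_eq_top] at h
      have := h _ ⟨p, hp, rfl⟩
      simp at this
    · intro h
      rw [hηdef]
      show sInf ((fun p => (OH p : ℕ∞)) '' (O.toClassInterp.eval q)) = ⊤
      rw [h, Set.image_empty, sInf_empty]
  cases s with
  | gci c d =>
      show rankSem T Ds (Concept.conj c (Concept.neg d)) = ⊤ ↔
        O.toClassInterp.eval c ⊆ O.toClassInterp.eval d
      rw [hrankeq, hempty, eval_conj, eval_neg, ← Set.diff_eq, Set.diff_eq_empty]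
  | dci c d =>
      show (rankSem T Ds (Concept.conj c d) < rankSem T Ds (Concept.conj c (Concept.neg d)) ∨
          rankSem T Ds c = ⊤) ↔
        minSet O.pref (O.toClassInterp.eval c) ⊆ O.toClassInterp.eval d
      simp only [hrankeq]
      by_cases hemp : O.toClassInterp.eval c = ∅
      · constructor
        · rintro - z hzmin
          obtain ⟨hz1, -⟩ := hzmin
          rw [hemp] at hz1
          exact absurd hz1 (Set.notMem_empty z)
        · intro _
          exact Or.inr ((hempty c).mpr hemp)
      · have hcne : (O.toClassInterp.eval c).Nonempty := Set.nonempty_iff_ne_empty.mpr hemp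
        have hηc : η c ≠ ⊤ := fun h => hemp ((hempty c).mp h)
        obtain ⟨pm, hpm, hmle⟩ := exists_height_min OH hcne
        have hminchar : minSet O.pref (O.toClassInterp.eval c) =
            {p | p ∈ O.toClassInterp.eval c ∧ OH p = OH pm} := by
          ext z
          constructor
          · rintro ⟨h1, h2⟩
            refine ⟨h1, le_antisymm ?_ (hmle z h1)⟩
            by_contra hcon
            push_neg at hcon
            exact h2 pm hpm (show OH pm < OH z from hcon)
          · rintro ⟨h1, h2⟩
            refine ⟨h1, fun y hy hlt => ?_⟩
            have h3 := hmle y hy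
            have hlt' : OH y < OH z := hlt
            omega
        constructor
        · rintro (hlt | htop)
          · intro z hzmin
            rw [hminchar] at hzmin
            obtain ⟨hz1, hz2⟩ := hzmin
            by_contra hzd
            have hzB : z ∈ O.toClassInterp.eval (Concept.conj c (Concept.neg d)) := by
              rw [eval_conj, eval_neg]
              exact ⟨hz1, hzd⟩
            have hB_le : η (Concept.conj c (Concept.neg d)) ≤ (OH pm : ℕ∞) :=
              sInf_le ⟨z, hzB, congrArg (fun k : ℕ => (k : ℕ∞)) hz2⟩
            have hA_ge : (OH pm : ℕ∞) ≤ η (Concept.conj c d) := by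
              refine le_sInf ?_
              rintro x ⟨p, hp, rfl⟩
              rw [eval_conj] at hp
              exact Nat.cast_le.mpr (hmle p hp.1)
            exact absurd hlt (not_lt.mpr (le_trans hB_le hA_ge))
          · exact absurd htop hηc
        · intro hsub
          left
          have hpmmin : pm ∈ minSet O.pref (O.toClassInterp.eval c) := by
            rw [hminchar]
            exact ⟨hpm, rfl⟩
          have hApm : pm ∈ O.toClassInterp.eval (Concept.conj c d) := by
            rw [eval_conj]
            exact ⟨hpm, hsub hpmmin⟩
          have hA_le : η (Concept.conj c d) ≤ (OH pm : ℕ∞) := sInf_le ⟨pm, hApm, rfl⟩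
          have hB_gt : (OH pm : ℕ∞) < η (Concept.conj c (Concept.neg d)) := by
            have hstep : ((OH pm : ℕ) : ℕ∞) < ((OH pm + 1 : ℕ) : ℕ∞) := by
              exact_mod_cast Nat.lt_succ_self (OH pm)
            refine lt_of_lt_of_le hstep (le_sInf ?_)
            rintro x ⟨p, hp, rfl⟩
            rw [eval_conj, eval_neg] at hp
            have h1 := hmle p hp.1
            have h2 : OH p ≠ OH pm := by
              intro hcon
              exact hp.2 (hsub (by rw [hminchar]; exact ⟨hp.1, hcon⟩))
            exact Nat.cast_le.mpr (by omega)
          exact lt_of_le_of_lt hA_le hB_gt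


end DefeasibleDL
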